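/- Let $X = \{-1, 0, 1\}$ with $f(-1) = 1$, $f(0) = 1/2$, $f(1) = -1$ and $g(-1) = -1$, $g(0) = 0$, $g(1) = 2$. Then for every $\eta > 0$ and every $\lambda \ge 0$, defining $L(x, \lambda) = f(x) + \eta \lambda g(x)$, we have $\min\{L(-1, \lambda), L(1, \lambda)\} \le 1/3 < 1/2 = L(0, \lambda)$; in particular $0$ is never a minimizer of $L(\cdot, \lambda)$ over $X$. -/

import Mathlib

theorem stmt13_general (f g : ℝ → ℝ)
    (hf1 : f (-1) = 1) (hf0 : f 0 = 1/2) (hf2 : f 1 = -1)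
    (hg1 : g (-1) = -1) (hg0 : g 0 = 0) (hg2 : g 1 = 2)
    (η lam : ℝ)
    (L : ℝ → ℝ) (hL : ∀ x, L x = f x + η * lam * g x) :
    min (L (-1)) (L 1) ≤ 1/3 ∧ (1/3 : ℝ) < 1/2 ∧ L 0 = 1/2 ∧
      min (L (-1)) (L 1) < L 0 := by
  have hL0 : L 0 = 1/2 := by rw [hL, hf0, hg0]; ring
  -- The weights 2/3, 1/3 annihilate g, so the combination does not depend on η * lam.
  have hcombo : (2/3 : ℝ) • L (-1) + (1/3 : ℝ) • L 1 = 1/3 := by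
    rw [hL, hL, hf1, hg1, hf2, hg2, smul_eq_mul, smul_eq_mul]; ring
  have hmin : min (L (-1)) (L 1) ≤ 1/3 :=
    hcombo ▸ Convex.min_le_combo _ _ (by norm_num) (by norm_num) (by norm_num)
  exact ⟨hmin, by norm_num, hL0, by linarith⟩

theorem stmt13 (f g : ℝ → ℝ)
    (hf1 : f (-1) = 1) (hf0 : f 0 = 1/2) (hf2 : f 1 = -1)
    (hg1 : g (-1) = -1) (hg0 : g 0 = 0) (hg2 : g 1 = 2)
    (η lam : ℝ) (hη : 0 < η) (hlam : 0 ≤ lam)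
    (L : ℝ → ℝ) (hL : ∀ x, L x = f x + η * lam * g x) :
    min (L (-1)) (L 1) ≤ 1/3 ∧ (1/3 : ℝ) < 1/2 ∧ L 0 = 1/2 ∧
      min (L (-1)) (L 1) < L 0 :=
  stmt13_general f g hf1 hf0 hf2 hg1 hg0 hg2 η lam L hL
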